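/- arXiv:2311.09572 — 7 statements merged into one kernel-verified Lean document; each statement's English description precedes it below -/
import Mathlib

section
/- Let p > 1 with Hölder conjugate p̂, let ν₀, ν₁, ω ≥ 0, and let 0 < x < 1. For the geometric probability sequence τ_x(n) = (1-x)·x^n one has the exact evaluation Υ(τ_x) = (p̂/(1-x))·(ν₀·(1 - x^{1/p̂}) + ν₁·(x - x^{1/p})) + ω·x/(1-x) - (x/(1-x))·log x - log(1-x). -/
/-!
Consecutive terms of `τ_x` differ by the factor `x`, so when `1/p + 1/p̂ = 1` the mixed terms
`τ_x(n)^{1/p} τ_x(n ± 1)^{1/p̂}` collapse to `τ_x(n) x^{1/p̂}` and `τ_x(n-1) x^{1/p}`. Every series in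
`Υ(τ_x)`, the entropy included since `log τ_x(n) = log (1-x) + n log x`, then reduces to
`∑ xⁿ = 1/(1-x)` and `∑ n xⁿ = x/(1-x)²`.
-/

open Real

/-- The functional `Υ` evaluated on a probability sequence on `ℕ`. -/
noncomputable def Upsilon (ν₀ ν₁ ω p phat : ℝ) (lam : ℕ → ℝ) : ℝ :=
  phat * ∑' n : ℕ,
      (ν₀ * ((n : ℝ) + 1) * (lam n - lam n ^ (1/p) * lam (n+1) ^ (1/phat))
        + ν₁ * (n : ℝ) * (lam n - lam n ^ (1/p) * lam (n-1) ^ (1/phat)))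
    + ω * ∑' n : ℕ, (n : ℝ) * lam n
    - ∑' n : ℕ, lam n * Real.log (lam n)

lemma rpow_mul_mul_rpow_of_add_eq_one {c y s t : ℝ} (hc : 0 ≤ c) (hy : 0 ≤ y) (hst : s + t = 1) :
    c ^ s * (c * y) ^ t = c * y ^ t := by
  rw [mul_rpow hc hy, ← mul_assoc, ← rpow_add' hc (by simp [hst]), hst, rpow_one]

lemma mul_rpow_mul_rpow_of_add_eq_one {c y s t : ℝ} (hc : 0 ≤ c) (hy : 0 ≤ y) (hst : s + t = 1) :
    (c * y) ^ s * c ^ t = c * y ^ s := by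
  rw [mul_comm, rpow_mul_mul_rpow_of_add_eq_one hc hy (by linarith)]

/-- The sequence `τ_x`. -/
noncomputable def geomSeq (x : ℝ) (n : ℕ) : ℝ := (1 - x) * x ^ n

namespace geomSeq

variable {x : ℝ}

lemma succ (n : ℕ) : geomSeq x (n + 1) = geomSeq x n * x := by
  simp only [geomSeq, pow_succ, mul_assoc]

lemma nonneg (hx0 : 0 ≤ x) (hx1 : x ≤ 1) (n : ℕ) : 0 ≤ geomSeq x n :=
  mul_nonneg (by linarith) (pow_nonneg hx0 n)

lemma sub_rpow_mul_succ_rpow (hx0 : 0 ≤ x) (hx1 : x ≤ 1) {s t : ℝ} (hst : s + t = 1) (n : ℕ) :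
    geomSeq x n - geomSeq x n ^ s * geomSeq x (n + 1) ^ t = geomSeq x n * (1 - x ^ t) := by
  rw [succ, rpow_mul_mul_rpow_of_add_eq_one (nonneg hx0 hx1 n) hx0 hst]
  ring

lemma coe_mul_sub_rpow_mul_pred_rpow (hx0 : 0 ≤ x) (hx1 : x ≤ 1) {s t : ℝ} (hst : s + t = 1)
    (n : ℕ) :
    (n : ℝ) * (geomSeq x n - geomSeq x n ^ s * geomSeq x (n - 1) ^ t)
      = (n : ℝ) * geomSeq x (n - 1) * (x - x ^ s) := by
  cases n with
  | zero => simp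
  | succ m =>
    rw [Nat.add_sub_cancel, succ, mul_rpow_mul_rpow_of_add_eq_one (nonneg hx0 hx1 m) hx0 hst]
    ring

lemma hasSum (hx0 : 0 ≤ x) (hx1 : x < 1) : HasSum (geomSeq x) 1 := by
  have := (hasSum_geometric_of_lt_one hx0 hx1).mul_left (1 - x)
  rwa [mul_inv_cancel₀ (by linarith)] at this

lemma hasSum_coe_mul (hx0 : 0 ≤ x) (hx1 : x < 1) :
    HasSum (fun n : ℕ => (n : ℝ) * geomSeq x n) (x / (1 - x)) := by
  have h := (hasSum_coe_mul_geometric_of_norm_lt_one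
    (by rwa [Real.norm_of_nonneg hx0] : ‖x‖ < 1)).mul_left (1 - x)
  rw [show (1 - x) * (x / (1 - x) ^ 2) = x / (1 - x) by field_simp [sub_ne_zero.mpr hx1.ne']] at h
  exact h.congr_fun fun n => by rw [geomSeq]; ring

lemma hasSum_coe_add_one_mul (hx0 : 0 ≤ x) (hx1 : x < 1) :
    HasSum (fun n : ℕ => ((n : ℝ) + 1) * geomSeq x n) (1 - x)⁻¹ := by
  have h := (hasSum_coe_mul hx0 hx1).add (hasSum hx0 hx1)
  rw [show x / (1 - x) + 1 = (1 - x)⁻¹ by field_simp [sub_ne_zero.mpr hx1.ne']; ring] at h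
  exact h.congr_fun fun n => by ring

lemma hasSum_coe_mul_pred (hx0 : 0 ≤ x) (hx1 : x < 1) :
    HasSum (fun n : ℕ => (n : ℝ) * geomSeq x (n - 1)) (1 - x)⁻¹ := by
  rw [← hasSum_nat_add_iff' 1]
  simpa using hasSum_coe_add_one_mul hx0 hx1

lemma hasSum_mul_log (hx0 : 0 < x) (hx1 : x < 1) :
    HasSum (fun n : ℕ => geomSeq x n * log (geomSeq x n))
      (log (1 - x) + x / (1 - x) * log x) := by
  have h := ((hasSum hx0.le hx1).mul_right (log (1 - x))).add
    ((hasSum_coe_mul hx0.le hx1).mul_right (log x))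
  rw [one_mul] at h
  refine h.congr_fun fun n => ?_
  rw [geomSeq, log_mul (by linarith) (by positivity), log_pow]
  ring

lemma hasSum_hopping_terms (hx0 : 0 ≤ x) (hx1 : x < 1) {s t : ℝ} (hst : s + t = 1) (ν₀ ν₁ : ℝ) :
    HasSum (fun n : ℕ =>
      ν₀ * ((n : ℝ) + 1) * (geomSeq x n - geomSeq x n ^ s * geomSeq x (n + 1) ^ t)
        + ν₁ * (n : ℝ) * (geomSeq x n - geomSeq x n ^ s * geomSeq x (n - 1) ^ t))
      ((ν₀ * (1 - x ^ t) + ν₁ * (x - x ^ s)) / (1 - x)) := by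
  have h := ((hasSum_coe_add_one_mul hx0 hx1).mul_left (ν₀ * (1 - x ^ t))).add
    ((hasSum_coe_mul_pred hx0 hx1).mul_left (ν₁ * (x - x ^ s)))
  rw [← add_mul, ← div_eq_mul_inv] at h
  refine h.congr_fun fun n => ?_
  rw [mul_assoc ν₁, coe_mul_sub_rpow_mul_pred_rpow hx0 hx1.le hst,
    sub_rpow_mul_succ_rpow hx0 hx1.le hst]
  ring

end geomSeq

theorem Upsilon_geometric_general (p phat ν₀ ν₁ ω : ℝ)
    (hconj : 1/p + 1/phat = 1)
    (x : ℝ) (hx0 : 0 < x) (hx1 : x < 1) :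
    Upsilon ν₀ ν₁ ω p phat (fun n => (1 - x) * x ^ n)
      = phat / (1 - x) * (ν₀ * (1 - x ^ (1/phat)) + ν₁ * (x - x ^ (1/p)))
        + ω * x / (1 - x) - x / (1 - x) * Real.log x - Real.log (1 - x) := by
  change Upsilon ν₀ ν₁ ω p phat (geomSeq x) = _
  rw [Upsilon, (geomSeq.hasSum_hopping_terms hx0.le hx1 hconj ν₀ ν₁).tsum_eq,
    (geomSeq.hasSum_coe_mul hx0.le hx1).tsum_eq, (geomSeq.hasSum_mul_log hx0 hx1).tsum_eq]
  ring

/-- Exact evaluation of `Υ` on the geometric (thermal) probability sequence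
`τ_x(n) = (1-x)·xⁿ`. -/
theorem Upsilon_geometric (p phat ν₀ ν₁ ω : ℝ)
    (hp : 1 < p) (hconj : 1/p + 1/phat = 1)
    (hν₀ : 0 ≤ ν₀) (hν₁ : 0 ≤ ν₁) (hω : 0 ≤ ω)
    (x : ℝ) (hx0 : 0 < x) (hx1 : x < 1) :
    Upsilon ν₀ ν₁ ω p phat (fun n => (1 - x) * x ^ n)
      = phat / (1 - x) * (ν₀ * (1 - x ^ (1/phat)) + ν₁ * (x - x ^ (1/p)))
        + ω * x / (1 - x) - x / (1 - x) * Real.log x - Real.log (1 - x) :=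
  Upsilon_geometric_general p phat ν₀ ν₁ ω hconj x hx0 hx1
end

section
/- Let p > 1 with Hölder conjugate p̂ and let λ be a probability sequence on ℕ with finite mean ∑ n·λ(n) < ∞, such that the series ∑ (n+1)·λ(n)^{1/p}·λ(n+1)^{1/p̂} converges. Set s_ℓ := ∑_{n=ℓ}^∞ λ(n). Then ∑_{ℓ=0}^∞ (s_ℓ - s_ℓ^{1/p}·s_{ℓ+1}^{1/p̂}) ≤ ∑_{n=0}^∞ (n+1)·(λ(n) - λ(n)^{1/p}·λ(n+1)^{1/p̂}). -/
/-!
Summing by rows, `∑ₗ s_ℓ = ∑ₙ (n + 1) λ(n)`, and likewise for `μ(n) = λ(n)^{1/p} λ(n+1)^{1/p̂}`.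
Hölder's inequality for the shifted sequences `λ(ℓ + ·)` and `λ(ℓ + 1 + ·)` bounds the tail sums
of `μ` by `s_ℓ^{1/p} s_{ℓ+1}^{1/p̂}`, so the claimed inequality holds termwise in `ℓ`.
-/

open Real

/-- Tail sums `s_ℓ = ∑_{n=ℓ}^∞ λ(n)` of a sequence. -/
noncomputable def tailSum (lam : ℕ → ℝ) (ℓ : ℕ) : ℝ := ∑' n : ℕ, lam (ℓ + n)

/- Each `f n` occurs in the tail sums `s_0, …, s_n`, i.e. once for each of the `n + 1` points of
the antidiagonal of `n` in `ℕ × ℕ`; nonnegativity makes the rearrangement legitimate. -/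
open Finset.HasAntidiagonal in
theorem hasSum_tailSum {f : ℕ → ℝ} (hf : ∀ n, 0 ≤ f n)
    (h : Summable fun n : ℕ => ((n : ℝ) + 1) * f n) :
    HasSum (tailSum f) (∑' n : ℕ, ((n : ℝ) + 1) * f n) := by
  let e := sigmaAntidiagonalEquivProd (A := ℕ)
  let F : ℕ × ℕ → ℝ := fun q => f (q.1 + q.2)
  have hfiber (n : ℕ) : HasSum (fun u : antidiagonal n => F (e ⟨n, u⟩)) ((n + 1) * f n) := by
    have hterm (u : antidiagonal n) : F (e ⟨n, u⟩) = f n := congrArg f (mem_antidiagonal.1 u.2)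
    simpa [hterm, add_one_mul] using hasSum_fintype fun _ : antidiagonal n => f n
  have hsigma : Summable (F ∘ e) :=
    (summable_sigma_of_nonneg fun _ => hf _).2
      ⟨fun n => (hfiber n).summable, h.congr fun n => (hfiber n).tsum_eq.symm⟩
  have hF : HasSum F (∑' n : ℕ, ((n : ℝ) + 1) * f n) :=
    e.hasSum_iff.1 (h.hasSum.sigma_of_hasSum hfiber hsigma)
  exact hF.prod_fiberwise fun ℓ => ((e.summable_iff.1 hsigma).prod_factor ℓ).hasSum

theorem tsum_rpow_mul_rpow_le {ι : Type*} {p q : ℝ} (hpq : p.HolderConjugate q) {a b : ι → ℝ}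
    (ha : ∀ i, 0 ≤ a i) (hb : ∀ i, 0 ≤ b i) (ha_sum : Summable a) (hb_sum : Summable b) :
    ∑' i, a i ^ (1 / p) * b i ^ (1 / q) ≤ (∑' i, a i) ^ (1 / p) * (∑' i, b i) ^ (1 / q) := by
  have hpow : ∀ {x r : ℝ}, 0 ≤ x → r ≠ 0 → (x ^ (1 / r)) ^ r = x := fun hx hr => by
    rw [one_div, Real.rpow_inv_rpow hx hr]
  have := inner_le_Lp_mul_Lq_tsum_of_nonneg hpq (f := fun i => a i ^ (1 / p))
    (g := fun i => b i ^ (1 / q)) (fun i => rpow_nonneg (ha i) _) (fun i => rpow_nonneg (hb i) _)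
    (by simpa only [hpow (ha _) hpq.ne_zero] using ha_sum)
    (by simpa only [hpow (hb _) hpq.symm.ne_zero] using hb_sum)
  simpa only [hpow (ha _) hpq.ne_zero, hpow (hb _) hpq.symm.ne_zero] using this

theorem tailSum_eq_add_tailSum_succ {f : ℕ → ℝ} (hf : Summable f) (ℓ : ℕ) :
    tailSum f ℓ = f ℓ + tailSum f (ℓ + 1) := by
  have hshift : Summable fun n => f (ℓ + n) := hf.comp_injective (add_right_injective ℓ)
  unfold tailSum
  rw [hshift.tsum_eq_zero_add]
  simp only [add_zero, add_assoc, add_comm 1]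

theorem tailSum_succ_le {f : ℕ → ℝ} (hf : ∀ n, 0 ≤ f n) (hs : Summable f) (ℓ : ℕ) :
    tailSum f (ℓ + 1) ≤ tailSum f ℓ := by
  rw [tailSum_eq_add_tailSum_succ hs ℓ]
  exact le_add_of_nonneg_left (hf ℓ)

theorem tailSum_rpow_mul_rpow_le {p q : ℝ} (hpq : p.HolderConjugate q) {f : ℕ → ℝ}
    (hf : ∀ n, 0 ≤ f n) (hs : Summable f) (ℓ : ℕ) :
    tailSum (fun n => f n ^ (1 / p) * f (n + 1) ^ (1 / q)) ℓ
      ≤ tailSum f ℓ ^ (1 / p) * tailSum f (ℓ + 1) ^ (1 / q) := by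
  have hshift : ∀ k, Summable fun n => f (k + n) := fun k =>
    hs.comp_injective (add_right_injective k)
  have := tsum_rpow_mul_rpow_le hpq (fun n => hf (ℓ + n)) (fun n => hf (ℓ + 1 + n))
    (hshift ℓ) (hshift (ℓ + 1))
  simpa only [tailSum, add_right_comm ℓ 1] using this

theorem rpow_mul_rpow_le_of_le {s t w₁ w₂ : ℝ} (ht : 0 ≤ t) (hts : t ≤ s) (hw₁ : 0 ≤ w₁)
    (hw₂ : 0 ≤ w₂) (hw : w₁ + w₂ = 1) : s ^ w₁ * t ^ w₂ ≤ s :=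
  calc s ^ w₁ * t ^ w₂ ≤ w₁ * s + w₂ * t :=
        geom_mean_le_arith_mean2_weighted hw₁ hw₂ (ht.trans hts) ht hw
    _ ≤ s := by nlinarith

/-- The Hölder-type inequality relating tail sums to the original sequence, used in the
proof of the meta log-Sobolev inequality. -/
theorem tailSum_holder_ineq (p phat : ℝ) (hp : 1 < p) (hconj : 1/p + 1/phat = 1)
    (lam : ℕ → ℝ) (hnn : ∀ n, 0 ≤ lam n) (hsum : HasSum lam 1)
    (hmean : Summable (fun n : ℕ => (n : ℝ) * lam n))
    (h3 : Summable (fun n : ℕ => ((n : ℝ) + 1) * lam n ^ (1/p) * lam (n+1) ^ (1/phat))) :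
    ∑' ℓ : ℕ, (tailSum lam ℓ - tailSum lam ℓ ^ (1/p) * tailSum lam (ℓ+1) ^ (1/phat))
      ≤ ∑' n : ℕ, ((n : ℝ) + 1) * (lam n - lam n ^ (1/p) * lam (n+1) ^ (1/phat)) := by
  have hpq : p.HolderConjugate phat :=
    Real.holderConjugate_iff.mpr ⟨hp, by simpa only [one_div] using hconj⟩
  let g : ℕ → ℝ := fun n => lam n ^ (1/p) * lam (n+1) ^ (1/phat)
  have hlam_sum : Summable fun n : ℕ => ((n : ℝ) + 1) * lam n :=
    (hmean.add hsum.summable).congr fun n => by ring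
  have hg_sum : Summable fun n : ℕ => ((n : ℝ) + 1) * g n := h3.congr fun n => by ring
  have hS := hasSum_tailSum hnn hlam_sum
  have hU := hasSum_tailSum (fun n => mul_nonneg (rpow_nonneg (hnn n) _) (rpow_nonneg (hnn _) _))
    hg_sum
  have hSU := hS.sub hU
  have hle : ∀ ℓ, tailSum lam ℓ - tailSum lam ℓ ^ (1/p) * tailSum lam (ℓ+1) ^ (1/phat)
      ≤ tailSum lam ℓ - tailSum g ℓ := fun ℓ =>
    sub_le_sub_left (tailSum_rpow_mul_rpow_le hpq hnn hsum.summable ℓ) _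
  have hnonneg :
      ∀ ℓ, 0 ≤ tailSum lam ℓ - tailSum lam ℓ ^ (1/p) * tailSum lam (ℓ+1) ^ (1/phat) :=
    fun ℓ => sub_nonneg.2 <| rpow_mul_rpow_le_of_le (tsum_nonneg fun n => hnn _)
      (tailSum_succ_le hnn hsum.summable ℓ) hpq.one_div_nonneg hpq.symm.one_div_nonneg hconj
  calc _ ≤ ∑' ℓ, (tailSum lam ℓ - tailSum g ℓ) :=
        Summable.tsum_le_tsum hle (.of_nonneg_of_le hnonneg hle hSU.summable) hSU.summable
    _ = _ := by
      rw [hSU.tsum_eq, ← hlam_sum.tsum_sub hg_sum]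
      exact tsum_congr fun n => by ring
end

section
/- Let β > 0 and 1 < p ≤ 2 with Hölder conjugate p̂, and set α_p := (p·p̂/(4β))·e^{β/2}·(1 - e^{-β/p})·(1 - e^{-β/p̂}). Then the limit as y → 1⁻ of the quotient [p·p̂·e^{β/2}·(y^{2/p} - e^{-β/p})·(y^{2/p̂} - e^{-β/p̂})] / [4·d(y²‖e^{-β})] equals α_p. (This quotient is the ratio E_p(τ)/D(τ‖σ_β) for the geometric probability sequence τ with parameter y², and the limit shows that the constant α_p in the p-log-Sobolev inequality is optimal.) -/
/-!
Every factor of the quotient is continuous at `y = 1`, including `a ↦ d(a‖b)` at `a = 1`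
because `x log x` extends continuously through `0`. Since `d(1‖e^{-β}) = β ≠ 0`, the limit is
the value of the quotient at `y = 1`, which is `α_p`.
-/

open Real Filter

/-- Binary relative entropy `d(a‖b)`. -/
noncomputable def binRelEnt (a b : ℝ) : ℝ :=
  a * Real.log (a / b) + (1 - a) * Real.log ((1 - a) / (1 - b))

theorem continuous_binRelEnt_left {b : ℝ} (hb0 : b ≠ 0) (hb1 : b ≠ 1) :
    Continuous fun a => binRelEnt a b := by
  have hmul_log : ∀ c ≠ (0 : ℝ), ∀ x, x * log (x / c) = c * (x / c * log (x / c)) := by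
    intro c hc x
    field_simp
  simp only [binRelEnt, hmul_log b hb0, hmul_log (1 - b) (sub_ne_zero.2 hb1.symm)]
  fun_prop

theorem binRelEnt_one_left (b : ℝ) : binRelEnt 1 b = -log b := by
  simp [binRelEnt]

theorem alpha_p_optimal_general (β p phat : ℝ) (hβ : 0 < β) :
    Tendsto (fun y : ℝ =>
        p * phat * Real.exp (β/2) * (y ^ (2/p) - Real.exp (-β/p))
            * (y ^ (2/phat) - Real.exp (-β/phat))
          / (4 * binRelEnt (y^2) (Real.exp (-β))))
      (nhdsWithin 1 (Set.Ioo (0:ℝ) 1))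
      (nhds (p * phat / (4 * β) * Real.exp (β/2) * (1 - Real.exp (-β/p))
        * (1 - Real.exp (-β/phat)))) := by
  have hexp_ne_one : exp (-β) ≠ 1 := by simpa using hβ.ne'
  have hbinRelEnt := continuous_binRelEnt_left (exp_pos (-β)).ne' hexp_ne_one
  have hden : 4 * binRelEnt (1 ^ 2) (exp (-β)) ≠ 0 := by
    simp [binRelEnt_one_left, hβ.ne']
  have hquot : ContinuousAt (fun y : ℝ =>
        p * phat * Real.exp (β/2) * (y ^ (2/p) - Real.exp (-β/p))
            * (y ^ (2/phat) - Real.exp (-β/phat))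
          / (4 * binRelEnt (y^2) (Real.exp (-β)))) 1 := by
    have := continuousAt_rpow_const 1 (2/p) (Or.inl one_ne_zero)
    have := continuousAt_rpow_const 1 (2/phat) (Or.inl one_ne_zero)
    exact ContinuousAt.div (by fun_prop) (by fun_prop) hden
  convert hquot.tendsto.mono_left nhdsWithin_le_nhds using 2
  simp only [one_rpow, one_pow, binRelEnt_one_left, log_exp]
  ring

/-- Optimality of the constant `α_p`: the ratio `E_p(τ)/D(τ‖σ_β)` for the geometric
probability sequence `τ` with parameter `y²` tends to `α_p` as `y → 1⁻`. -/
theorem alpha_p_optimal (β p phat : ℝ) (hβ : 0 < β)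
    (hp1 : 1 < p) (hp2 : p ≤ 2) (hconj : 1/p + 1/phat = 1) :
    Tendsto (fun y : ℝ =>
        p * phat * Real.exp (β/2) * (y ^ (2/p) - Real.exp (-β/p))
            * (y ^ (2/phat) - Real.exp (-β/phat))
          / (4 * binRelEnt (y^2) (Real.exp (-β))))
      (nhdsWithin 1 (Set.Ioo (0:ℝ) 1))
      (nhds (p * phat / (4 * β) * Real.exp (β/2) * (1 - Real.exp (-β/p))
        * (1 - Real.exp (-β/phat)))) :=
  alpha_p_optimal_general β p phat hβ
end

section
/- Let p > 1 with Hölder conjugate p̂ and fix y ∈ (0,1). Then the partial derivative (d/dx) φ(x,y) is strictly negative for every x ∈ (0,y) and strictly positive for every x ∈ (y,1). Consequently, for fixed y the function x ↦ φ(x,y) attains its minimum over (0,1) exactly at x = y, where φ(y,y) = 0. -/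
open Real

/-- The function `φ(x,y)` encoding the `p`-log-Sobolev inequality for the quantum
Ornstein–Uhlenbeck semigroup evaluated on thermal states. -/
noncomputable def phiFun (p phat x y : ℝ) : ℝ :=
  -((x ^ (2/p) - y ^ (2/p)) * (x ^ (2/phat) - y ^ (2/phat)) * Real.log (x ^ 2)) /
      ((1 - x ^ (2/p)) * (1 - x ^ (2/phat)))
    - binRelEnt (y ^ 2) (x ^ 2)

/-!
Write `a = 2/p`, `b = 2/p̂`, so `a + b = 2`, and put `u = x^a`, `v = x^b`, so `uv = x²`.
For fixed `x`, the derivative `x · ∂ₓφ(x,y)` equals `Q(y) - Q(x)` for a function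
`Q(z) = C₁ z^a + C₂ z^b + C₃ z²` whose coefficients depend only on `x`. The inequality
`log s < s - 1` at `s = u, v` gives `C₁, C₂ < 0`; hence `Q'(z) = z W(z)` with `W` strictly
increasing, and `Q` has no interior local maximum. As `W(x) < 0`, `Q` decreases on `(0, x]`, so
`Q(y) > Q(x)` for `y < x`; as `Q(1) = Q(x)`, `Q(y) < Q(x)` for `x < y < 1`. This is the sign of
`∂ₓφ`, and the minimum at `x = y`, where `φ(y,y) = 0`, follows by monotonicity.
-/

open Set

theorem strictAntiOn_Icc_of_hasDerivAt_neg {f f' : ℝ → ℝ} {s t : ℝ}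
    (hf : ∀ z ∈ Icc s t, HasDerivAt f (f' z) z) (hf' : ∀ z ∈ Ioo s t, f' z < 0) :
    StrictAntiOn f (Icc s t) :=
  strictAntiOn_of_hasDerivWithinAt_neg (convex_Icc s t)
    (fun z hz => (hf z hz).continuousAt.continuousWithinAt)
    (fun z hz => by
      rw [interior_Icc] at hz ⊢
      exact (hf z (Ioo_subset_Icc_self hz)).hasDerivWithinAt)
    (by simpa only [interior_Icc] using hf')

theorem strictMonoOn_Icc_of_hasDerivAt_pos {f f' : ℝ → ℝ} {s t : ℝ}
    (hf : ∀ z ∈ Icc s t, HasDerivAt f (f' z) z) (hf' : ∀ z ∈ Ioo s t, 0 < f' z) :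
    StrictMonoOn f (Icc s t) :=
  strictMonoOn_of_hasDerivWithinAt_pos (convex_Icc s t)
    (fun z hz => (hf z hz).continuousAt.continuousWithinAt)
    (fun z hz => by
      rw [interior_Icc] at hz ⊢
      exact (hf z (Ioo_subset_Icc_self hz)).hasDerivWithinAt)
    (by simpa only [interior_Icc] using hf')

theorem lt_of_hasDerivAt_neg_of_pos {f f' : ℝ → ℝ} {s t y x : ℝ}
    (hf : ∀ z ∈ Ioo s t, HasDerivAt f (f' z) z) (hneg : ∀ z ∈ Ioo s y, f' z < 0)
    (hpos : ∀ z ∈ Ioo y t, 0 < f' z) (hy : y ∈ Ioo s t) (hx : x ∈ Ioo s t) (hxy : x ≠ y) :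
    f y < f x := by
  rcases hxy.lt_or_gt with hlt | hgt
  · exact strictAntiOn_Icc_of_hasDerivAt_neg
      (fun z hz => hf z ⟨hx.1.trans_le hz.1, hz.2.trans_lt hy.2⟩)
      (fun z hz => hneg z ⟨hx.1.trans hz.1, hz.2⟩) ⟨le_rfl, hlt.le⟩ ⟨hlt.le, le_rfl⟩ hlt
  · exact strictMonoOn_Icc_of_hasDerivAt_pos
      (fun z hz => hf z ⟨hy.1.trans_le hz.1, hz.2.trans_lt hx.2⟩)
      (fun z hz => hpos z ⟨hz.1, hz.2.trans hx.2⟩) ⟨le_rfl, hgt.le⟩ ⟨hgt.le, le_rfl⟩ hgt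

section SignChange

variable {Q W : ℝ → ℝ}

theorem apply_lt_apply_left_of_hasDerivAt_mul
    (hQ : ∀ z ∈ Ioi (0 : ℝ), HasDerivAt Q (z * W z) z) (hW : StrictMonoOn W (Ioi 0))
    {x y : ℝ} (hy : 0 < y) (hyx : y < x) (hWx : W x < 0) : Q x < Q y :=
  strictAntiOn_Icc_of_hasDerivAt_neg (fun z hz => hQ z (hy.trans_le hz.1))
    (fun _ hz => mul_neg_of_pos_of_neg (hy.trans hz.1)
      ((hW (hy.trans hz.1) (hy.trans hyx) hz.2).trans hWx))
    ⟨le_rfl, hyx.le⟩ ⟨hyx.le, le_rfl⟩ hyx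

theorem apply_lt_apply_right_of_hasDerivAt_mul
    (hQ : ∀ z ∈ Ioi (0 : ℝ), HasDerivAt Q (z * W z) z) (hW : StrictMonoOn W (Ioi 0))
    {x y c : ℝ} (hx : 0 < x) (hxy : x < y) (hyc : y < c) (hc : Q c = Q x) : Q y < Q x := by
  have hy : 0 < y := hx.trans hxy
  rcases le_or_gt (W y) 0 with hWy | hWy
  · exact strictAntiOn_Icc_of_hasDerivAt_neg (fun z hz => hQ z (hx.trans_le hz.1))
      (fun z hz => mul_neg_of_pos_of_neg (hx.trans hz.1)
        ((hW (hx.trans hz.1) hy hz.2).trans_le hWy))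
      ⟨le_rfl, hxy.le⟩ ⟨hxy.le, le_rfl⟩ hxy
  · rw [← hc]
    exact strictMonoOn_Icc_of_hasDerivAt_pos (fun z hz => hQ z (hy.trans_le hz.1))
      (fun z hz => mul_pos (hy.trans hz.1) (hWy.trans (hW hy (hy.trans hz.1) hz.1)))
      ⟨le_rfl, hyc.le⟩ ⟨hyc.le, le_rfl⟩ hyc

end SignChange

theorem mul_log_lt_rpow_sub_one {a x : ℝ} (hx : 0 < x) (hxa : x ^ a ≠ 1) :
    a * log x < x ^ a - 1 := by
  rw [← log_rpow hx]
  exact log_lt_sub_one_of_pos (rpow_pos_of_pos hx a) hxa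

theorem hasDerivAt_rpow_add_rpow_add_sq {a b c₁ c₂ c₃ z : ℝ} (hz : 0 < z) :
    HasDerivAt (fun w => c₁ * w ^ a + c₂ * w ^ b + c₃ * w ^ 2)
      (z * (a * c₁ * z ^ (a - 2) + b * c₂ * z ^ (b - 2) + 2 * c₃)) z := by
  have hpow : ∀ r : ℝ, z ^ (r - 1) = z * z ^ (r - 2) := fun r => by
    rw [show r - 1 = r - 2 + 1 by ring, rpow_add_one hz.ne', mul_comm]
  refine ((((hasDerivAt_rpow_const (Or.inl hz.ne')).const_mul c₁).add
    ((hasDerivAt_rpow_const (Or.inl hz.ne')).const_mul c₂)).add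
    ((hasDerivAt_pow 2 z).const_mul c₃)).congr_deriv ?_
  rw [hpow, hpow]
  push_cast
  ring

theorem strictMonoOn_mul_rpow_add_mul_rpow {c₁ c₂ c r₁ r₂ : ℝ} (hc₁ : c₁ < 0) (hc₂ : c₂ < 0)
    (hr₁ : r₁ < 0) (hr₂ : r₂ < 0) :
    StrictMonoOn (fun z => c₁ * z ^ r₁ + c₂ * z ^ r₂ + c) (Ioi 0) := by
  intro z hz w _ hzw
  have h₁ := mul_lt_mul_of_neg_left (rpow_lt_rpow_of_neg hz hzw hr₁) hc₁
  have h₂ := mul_lt_mul_of_neg_left (rpow_lt_rpow_of_neg hz hzw hr₂) hc₂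
  dsimp only
  linarith

theorem rpow_mul_rpow_of_add_eq_two {a b x : ℝ} (hab : a + b = 2) (hx : 0 < x) :
    x ^ a * x ^ b = x ^ 2 := by
  rw [← rpow_add hx, hab, rpow_two]

theorem Real.HolderConjugate.two_div_add_two_div {p q : ℝ} (h : p.HolderConjugate q) :
    2 / p + 2 / q = 2 := by
  rw [div_eq_mul_inv, div_eq_mul_inv, ← mul_add, h.inv_add_inv_eq_one, mul_one]

theorem hasDerivAt_binRelEnt_right {a b : ℝ} (ha0 : 0 < a) (ha1 : a < 1) (hb0 : 0 < b)
    (hb1 : b < 1) : HasDerivAt (binRelEnt a) ((b - a) / (b * (1 - b))) b := by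
  have h1b : 1 - b ≠ 0 := sub_ne_zero.2 hb1.ne'
  have hlog := (((hasDerivAt_log hb0.ne').const_sub (log a)).const_mul a).add
    (((((hasDerivAt_id' b).const_sub 1).log h1b).const_sub (log (1 - a))).const_mul (1 - a))
  have heq : binRelEnt a =ᶠ[nhds b]
      fun c => a * (log a - log c) + (1 - a) * (log (1 - a) - log (1 - c)) := by
    filter_upwards [Ioo_mem_nhds hb0 hb1] with c hc
    rw [binRelEnt, log_div ha0.ne' hc.1.ne', log_div (by linarith) (by linarith [hc.2])]
  refine (hlog.congr_of_eventuallyEq heq).congr_deriv ?_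
  field_simp
  ring

theorem binRelEnt_self (a : ℝ) : binRelEnt a a = 0 := by
  simp [binRelEnt]

theorem phiFun_self (p phat y : ℝ) : phiFun p phat y y = 0 := by
  simp [phiFun, binRelEnt_self]

/- With `t = log x`, `u = x ^ a`, `v = x ^ b`, one has
`x · ∂ₓφ(x,y) = C₁ (y ^ a - u) + C₂ (y ^ b - v) + C₃ (y ^ 2 - x ^ 2)`,
where `Cᵢ = phiCᵢ a b t u v`. -/
noncomputable def phiC1 (a b t u v : ℝ) : ℝ :=
  2*v*((1-u)*(1-v) + t*(a*u*(1-v) + b*(1-u))) / ((1-u)^2*(1-v)^2)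

noncomputable def phiC2 (a b t u v : ℝ) : ℝ :=
  2*u*((1-u)*(1-v) + t*(b*v*(1-u) + a*(1-v))) / ((1-u)^2*(1-v)^2)

noncomputable def phiC3 (a b t u v : ℝ) : ℝ :=
  (2*((1-u)*(1-v))^2 - (1-u*v)*(2*(1-u)*(1-v) + 2*t*(a*u*(1-v)+b*v*(1-u))))
    / (((1-u)*(1-v))^2*(1-u*v))

section Coefficients

variable {a b t u v : ℝ}

theorem phiC1_neg (ha : 0 < a) (hu0 : 0 < u) (hu1 : u < 1) (hv0 : 0 < v) (hv1 : v < 1)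
    (ht : t < 0) (hlv : b*t < v - 1) : phiC1 a b t u v < 0 := by
  have h1u : 0 < 1 - u := by linarith
  have h1v : 0 < 1 - v := by linarith
  have k1 : t*(a*u*(1-v)) < 0 := mul_neg_of_neg_of_pos ht (by positivity)
  have k2 : (1-u)*(b*t) < (1-u)*(v-1) := mul_lt_mul_of_pos_left hlv h1u
  exact div_neg_of_neg_of_pos (mul_neg_of_pos_of_neg (by positivity) (by linarith))
    (by positivity)

theorem phiC2_neg (hb : 0 < b) (hu0 : 0 < u) (hu1 : u < 1) (hv0 : 0 < v) (hv1 : v < 1)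
    (ht : t < 0) (hlu : a*t < u - 1) : phiC2 a b t u v < 0 := by
  have h1u : 0 < 1 - u := by linarith
  have h1v : 0 < 1 - v := by linarith
  have k1 : t*(b*v*(1-u)) < 0 := mul_neg_of_neg_of_pos ht (by positivity)
  have k2 : (1-v)*(a*t) < (1-v)*(u-1) := mul_lt_mul_of_pos_left hlu h1v
  exact div_neg_of_neg_of_pos (mul_neg_of_pos_of_neg (by positivity) (by linarith))
    (by positivity)

theorem phiC_weighted_sum_eq (hab : a + b = 2) (hu1 : u ≠ 1) (hv1 : v ≠ 1) (huv : u * v ≠ 1) :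
    a * phiC1 a b t u v * u + b * phiC2 a b t u v * v + 2 * phiC3 a b t u v * (u * v)
      = 4*u*v*((1-u)*(1-v) + a*b*t*(1-u*v)) / ((1-u)*(1-v)*(1-u*v)) := by
  obtain rfl : b = 2 - a := by linarith
  have h1u : 1 - u ≠ 0 := sub_ne_zero.2 hu1.symm
  have h1v : 1 - v ≠ 0 := sub_ne_zero.2 hv1.symm
  have h1vu : 1 - v * u ≠ 0 := by rw [mul_comm]; exact sub_ne_zero.2 huv.symm
  unfold phiC1 phiC2 phiC3
  field_simp
  ring

theorem phiC_weighted_sum_neg (ha : 0 < a) (hb : 0 < b) (hab : a + b = 2) (hu0 : 0 < u)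
    (hu1 : u < 1) (hv0 : 0 < v) (hv1 : v < 1) (hlu : a*t < u - 1) (hlv : b*t < v - 1) :
    a * phiC1 a b t u v * u + b * phiC2 a b t u v * v + 2 * phiC3 a b t u v * (u * v) < 0 := by
  have h1u : 0 < 1 - u := by linarith
  have h1v : 0 < 1 - v := by linarith
  have h1uv : 0 < 1 - u * v := by nlinarith
  rw [phiC_weighted_sum_eq hab hu1.ne hv1.ne (by linarith)]
  refine div_neg_of_neg_of_pos (mul_neg_of_pos_of_neg (by positivity) ?_) (by positivity)
  obtain rfl : b = 2 - a := by linarith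
  have e1 : (2-a)*(a*t) < (2-a)*(u-1) := mul_lt_mul_of_pos_left hlu hb
  have e2 : a*((2-a)*t) < a*(v-1) := mul_lt_mul_of_pos_left hlv ha
  have g : (2*(a*(2-a)*t))*(1-u*v) < ((2-a)*(u-1)+a*(v-1))*(1-u*v) :=
    mul_lt_mul_of_pos_right (by linarith) h1uv
  have m : 0 < (2-a)*v*(1-u)^2 + a*u*(1-v)^2 := by positivity
  nlinarith [g, m]

theorem phiC_sum_eq (hab : a + b = 2) (hu1 : u ≠ 1) (hv1 : v ≠ 1) (huv : u * v ≠ 1) :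
    phiC1 a b t u v + phiC2 a b t u v + phiC3 a b t u v
      = phiC1 a b t u v * u + phiC2 a b t u v * v + phiC3 a b t u v * (u * v) := by
  obtain rfl : b = 2 - a := by linarith
  have h1u : 1 - u ≠ 0 := sub_ne_zero.2 hu1.symm
  have h1v : 1 - v ≠ 0 := sub_ne_zero.2 hv1.symm
  have h1vu : 1 - v * u ≠ 0 := by rw [mul_comm]; exact sub_ne_zero.2 huv.symm
  unfold phiC1 phiC2 phiC3
  field_simp
  ring

end Coefficients

noncomputable def phiQ (a b x z : ℝ) : ℝ :=
  phiC1 a b (log x) (x ^ a) (x ^ b) * z ^ a + phiC2 a b (log x) (x ^ a) (x ^ b) * z ^ b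
    + phiC3 a b (log x) (x ^ a) (x ^ b) * z ^ 2

section PhiQ

variable {a b x : ℝ}

theorem phiQ_one (ha : 0 < a) (hb : 0 < b) (hab : a + b = 2) (hx0 : 0 < x) (hx1 : x < 1) :
    phiQ a b x 1 = phiQ a b x x := by
  have hu := rpow_lt_one hx0.le hx1 ha
  have hv := rpow_lt_one hx0.le hx1 hb
  have huv : x ^ a * x ^ b ≠ 1 := by
    rw [rpow_mul_rpow_of_add_eq_two hab hx0]
    nlinarith
  simp only [phiQ, one_rpow, one_pow, mul_one, ← rpow_mul_rpow_of_add_eq_two hab hx0]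
  exact phiC_sum_eq hab hu.ne hv.ne huv

theorem exists_hasDerivAt_phiQ (ha : 0 < a) (hb : 0 < b) (hab : a + b = 2) (hx0 : 0 < x)
    (hx1 : x < 1) :
    ∃ W : ℝ → ℝ, (∀ z ∈ Ioi (0 : ℝ), HasDerivAt (phiQ a b x) (z * W z) z) ∧
      StrictMonoOn W (Ioi 0) ∧ W x < 0 := by
  have hu0 : 0 < x ^ a := rpow_pos_of_pos hx0 a
  have hv0 : 0 < x ^ b := rpow_pos_of_pos hx0 b
  have hu1 : x ^ a < 1 := rpow_lt_one hx0.le hx1 ha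
  have hv1 : x ^ b < 1 := rpow_lt_one hx0.le hx1 hb
  have ht : log x < 0 := log_neg hx0 hx1
  have hlu : a * log x < x ^ a - 1 := mul_log_lt_rpow_sub_one hx0 hu1.ne
  have hlv : b * log x < x ^ b - 1 := mul_log_lt_rpow_sub_one hx0 hv1.ne
  refine ⟨_, fun z hz => hasDerivAt_rpow_add_rpow_add_sq hz,
    strictMonoOn_mul_rpow_add_mul_rpow
      (mul_neg_of_pos_of_neg ha (phiC1_neg ha hu0 hu1 hv0 hv1 ht hlv))
      (mul_neg_of_pos_of_neg hb (phiC2_neg hb hu0 hu1 hv0 hv1 ht hlu))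
      (by linarith) (by linarith), ?_⟩
  rw [rpow_sub hx0, rpow_sub hx0, rpow_two, ← rpow_mul_rpow_of_add_eq_two hab hx0]
  refine lt_of_eq_of_lt ?_ (div_neg_of_neg_of_pos
    (phiC_weighted_sum_neg ha hb hab hu0 hu1 hv0 hv1 hlu hlv) (mul_pos hu0 hv0))
  field_simp

theorem phiQ_lt_of_gt (ha : 0 < a) (hb : 0 < b) (hab : a + b = 2) {y : ℝ} (hy0 : 0 < y)
    (hyx : y < x) (hx1 : x < 1) : phiQ a b x x < phiQ a b x y := by
  obtain ⟨W, hQ, hW, hWx⟩ := exists_hasDerivAt_phiQ ha hb hab (hy0.trans hyx) hx1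
  exact apply_lt_apply_left_of_hasDerivAt_mul hQ hW hy0 hyx hWx

theorem phiQ_lt_of_lt (ha : 0 < a) (hb : 0 < b) (hab : a + b = 2) {y : ℝ} (hx0 : 0 < x)
    (hxy : x < y) (hy1 : y < 1) : phiQ a b x y < phiQ a b x x := by
  obtain ⟨W, hQ, hW, -⟩ := exists_hasDerivAt_phiQ ha hb hab hx0 (hxy.trans hy1)
  exact apply_lt_apply_right_of_hasDerivAt_mul hQ hW hx0 hxy hy1
    (phiQ_one ha hb hab hx0 (hxy.trans hy1))

end PhiQ

theorem hasDerivAt_phiFun {p phat x y : ℝ} (h : p.HolderConjugate phat) (hy0 : 0 < y)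
    (hy1 : y < 1) (hx0 : 0 < x) (hx1 : x < 1) :
    HasDerivAt (fun t => phiFun p phat t y)
      ((phiQ (2/p) (2/phat) x y - phiQ (2/p) (2/phat) x x) / x) x := by
  set a := 2 / p
  set b := 2 / phat
  have ha : 0 < a := div_pos two_pos h.pos
  have hb : 0 < b := div_pos two_pos h.symm.pos
  have hab : a + b = 2 := h.two_div_add_two_div
  have hu1 : x ^ a < 1 := rpow_lt_one hx0.le hx1 ha
  have hv1 : x ^ b < 1 := rpow_lt_one hx0.le hx1 hb
  have hXa : HasDerivAt (fun z => z ^ a) (a * x ^ (a - 1)) x :=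
    hasDerivAt_rpow_const (Or.inl hx0.ne')
  have hXb : HasDerivAt (fun z => z ^ b) (b * x ^ (b - 1)) x :=
    hasDerivAt_rpow_const (Or.inl hx0.ne')
  have hL := (hasDerivAt_pow 2 x).log (pow_ne_zero 2 hx0.ne')
  have hE := (hasDerivAt_binRelEnt_right (pow_pos hy0 2) (pow_lt_one₀ hy0.le hy1 two_ne_zero)
    (pow_pos hx0 2) (pow_lt_one₀ hx0.le hx1 two_ne_zero)).comp (h := fun z => z ^ 2) x
    (hasDerivAt_pow 2 x)
  have hphi := ((((hXa.sub_const (y ^ a)).mul (hXb.sub_const (y ^ b))).mul hL).neg.div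
    ((hXa.const_sub 1).mul (hXb.const_sub 1))
    (mul_pos (sub_pos.2 hu1) (sub_pos.2 hv1)).ne').sub hE
  refine hphi.congr_deriv ?_
  -- Eliminating `x ^ b` leaves the algebraically independent atoms `x`, `x ^ a`, `log x`,
  -- `y ^ a`, `y ^ b`, so that the remaining identity is a rational-function identity.
  have hxb : x ^ b = x ^ 2 / x ^ a := by
    rw [← rpow_mul_rpow_of_add_eq_two hab hx0,
      mul_div_cancel_left₀ _ (rpow_pos_of_pos hx0 a).ne']
  have h1x2 : 1 - x ^ 2 ≠ 0 := by nlinarith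
  have hxa2 : x ^ a - x ^ 2 ≠ 0 := by
    rw [← rpow_mul_rpow_of_add_eq_two hab hx0]
    nlinarith [rpow_pos_of_pos hx0 a]
  have h1xa : 1 - x ^ a ≠ 0 := by linarith
  simp only [Pi.mul_apply, Pi.neg_apply, phiQ, phiC1, phiC2, phiC3, rpow_sub_one hx0.ne',
    ← rpow_mul_rpow_of_add_eq_two hab hy0, log_pow]
  rw [hxb]
  field_simp
  ring

/-- Sign of `(d/dx) φ(x,y)`: strictly negative on `(0,y)`, strictly positive on `(y,1)`.
Consequently `x ↦ φ(x,y)` attains its minimum over `(0,1)` exactly at `x = y`,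
where `φ(y,y) = 0`. -/
theorem phi_deriv_sign_and_min (p phat : ℝ) (hp : 1 < p) (hconj : 1/p + 1/phat = 1)
    (y : ℝ) (hy : y ∈ Set.Ioo (0:ℝ) 1) :
    (∀ x : ℝ, 0 < x → x < y → deriv (fun t => phiFun p phat t y) x < 0)
    ∧ (∀ x : ℝ, y < x → x < 1 → 0 < deriv (fun t => phiFun p phat t y) x)
    ∧ phiFun p phat y y = 0
    ∧ (∀ x : ℝ, x ∈ Set.Ioo (0:ℝ) 1 → x ≠ y → 0 < phiFun p phat x y) := by
  obtain ⟨hy0, hy1⟩ := hy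
  have h : p.HolderConjugate phat :=
    Real.holderConjugate_iff.2 ⟨hp, by simpa only [one_div] using hconj⟩
  have ha : 0 < 2 / p := div_pos two_pos h.pos
  have hb : 0 < 2 / phat := div_pos two_pos h.symm.pos
  have hab := h.two_div_add_two_div
  set D := fun x => (phiQ (2/p) (2/phat) x y - phiQ (2/p) (2/phat) x x) / x
  have hderiv : ∀ x ∈ Ioo 0 1, HasDerivAt (fun t => phiFun p phat t y) (D x) x :=
    fun x hx => hasDerivAt_phiFun h hy0 hy1 hx.1 hx.2
  have hneg : ∀ x ∈ Ioo 0 y, D x < 0 := fun x hx =>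
    div_neg_of_neg_of_pos (sub_neg.2 (phiQ_lt_of_lt ha hb hab hx.1 hx.2 hy1)) hx.1
  have hpos : ∀ x ∈ Ioo y 1, 0 < D x := fun x hx =>
    div_pos (sub_pos.2 (phiQ_lt_of_gt ha hb hab hy0 hx.1 hx.2)) (hy0.trans hx.1)
  refine ⟨fun x hx0 hxy => ?_, fun x hyx hx1 => ?_, phiFun_self p phat y, fun x hx hxy => ?_⟩
  · rw [(hderiv x ⟨hx0, hxy.trans hy1⟩).deriv]
    exact hneg x ⟨hx0, hxy⟩
  · rw [(hderiv x ⟨hy0.trans hyx, hx1⟩).deriv]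
    exact hpos x ⟨hyx, hx1⟩
  · simpa only [phiFun_self] using
      lt_of_hasDerivAt_neg_of_pos hderiv hneg hpos ⟨hy0, hy1⟩ hx hxy
end

section
/- Let k ∈ ℕ and let ψ_0, …, ψ_k be an orthonormal family of k+1 vectors in ℓ²(ℕ,ℂ). Then ∑_{j=0}^{k} ∑_{n=0}^{∞} n·|ψ_j(n)|² ≥ k·(k+1)/2, where the left-hand side is interpreted as a value in [0,∞]. (Equivalently: the infimum over rank-(k+1) orthogonal projections Q of the trace of Q against the number operator equals 0 + 1 + ⋯ + k, attained by the projection onto the first k+1 Fock basis vectors.) -/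
/-!
The weights `p n = ∑ⱼ |ψⱼ(n)|²` satisfy `p n ≤ 1` (Bessel's inequality against the basis
vector `eₙ`) and `∑ₙ p n = k + 1`. Writing `∑ₙ n p n = ∑ₘ ∑_{n > m} p n`, the mass above level
`m` is at least `k - m`, since at most `m + 1` of it sits at levels `≤ m`; summing over `m`
gives `∑_{m ≤ k} (k - m) = k(k+1)/2`.
-/

open scoped ENNReal
open Finset

namespace ENNReal

theorem tsum_natCast_mul_eq_tsum_tsum_ite (p : ℕ → ℝ≥0∞) :
    ∑' n : ℕ, (n : ℝ≥0∞) * p n = ∑' m, ∑' n, if m < n then p n else 0 := by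
  rw [ENNReal.tsum_comm]
  refine tsum_congr fun n => ?_
  rw [tsum_eq_sum (s := range n) fun m hm => if_neg (by simpa using hm),
    sum_congr rfl fun m hm => if_pos (mem_range.mp hm)]
  simp [mul_comm]

theorem tsum_le_add_tsum_ite {p : ℕ → ℝ≥0∞} (hp : ∀ n, p n ≤ 1) (m : ℕ) :
    ∑' n, p n ≤ (m + 1) + ∑' n, if m < n then p n else 0 := by
  have head : ∑' n, (if m < n then 0 else p n) ≤ m + 1 := by
    rw [tsum_eq_sum (s := range (m + 1)) fun n hn =>
      if_pos (by simpa [Nat.lt_succ_iff] using hn)]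
    calc ∑ n ∈ range (m + 1), (if m < n then 0 else p n) ≤ ∑ _n ∈ range (m + 1), (1 : ℝ≥0∞) :=
          sum_le_sum fun n _ => by split_ifs <;> simp [hp n]
      _ = m + 1 := by simp
  calc ∑' n, p n = ∑' n, ((if m < n then 0 else p n) + if m < n then p n else 0) :=
        tsum_congr fun n => by split_ifs <;> simp
    _ ≤ (m + 1) + ∑' n, if m < n then p n else 0 := by
        rw [ENNReal.tsum_add]; gcongr

theorem sum_range_le_tsum_natCast_mul {p : ℕ → ℝ≥0∞} (hp : ∀ n, p n ≤ 1) {N : ℕ}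
    (hN : (N : ℝ≥0∞) ≤ ∑' n, p n) : ∑ m ∈ range N, (m : ℝ≥0∞) ≤ ∑' n : ℕ, (n : ℝ≥0∞) * p n := by
  have tail (m : ℕ) : ((N - 1 - m : ℕ) : ℝ≥0∞) ≤ ∑' n, if m < n then p n else 0 := by
    rw [Nat.sub_sub, add_comm 1, ENNReal.natCast_sub, tsub_le_iff_left, Nat.cast_succ]
    exact hN.trans (tsum_le_add_tsum_ite hp m)
  calc ∑ m ∈ range N, (m : ℝ≥0∞) = ∑ m ∈ range N, ((N - 1 - m : ℕ) : ℝ≥0∞) :=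
        (sum_range_reflect (fun m : ℕ => (m : ℝ≥0∞)) N).symm
    _ ≤ ∑' m, ∑' n, if m < n then p n else 0 :=
        (sum_le_sum fun m _ => tail m).trans (ENNReal.sum_le_tsum _)
    _ = ∑' n : ℕ, (n : ℝ≥0∞) * p n := (tsum_natCast_mul_eq_tsum_tsum_ite p).symm

end ENNReal

namespace lp

theorem tsum_nnnorm_sq_eq {α : Type*} {E : α → Type*} [∀ a, NormedAddCommGroup (E a)]
    (f : lp E 2) : ∑' a, (‖f a‖₊ : ℝ≥0∞) ^ 2 = (‖f‖₊ : ℝ≥0∞) ^ 2 := by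
  have h := lp.hasSum_norm (p := 2) (by norm_num) f
  simp only [ENNReal.toReal_ofNat, Real.rpow_two] at h
  have h' : HasSum (fun a => ‖f a‖₊ ^ 2) (‖f‖₊ ^ 2) := by
    rw [← NNReal.hasSum_coe]; simpa only [NNReal.coe_pow, coe_nnnorm] using h
  exact_mod_cast ENNReal.tsum_coe_eq h'

end lp

theorem Orthonormal.sum_nnnorm_apply_sq_le_one {ι α 𝕜 : Type*} [RCLike 𝕜]
    {v : ι → lp (fun _ : α => 𝕜) 2} (hv : Orthonormal 𝕜 v) (s : Finset ι) (a : α) :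
    ∑ j ∈ s, (‖v j a‖₊ : ℝ≥0∞) ^ 2 ≤ 1 := by
  classical
  have h := hv.sum_inner_products_le (s := s) (lp.single 2 a (1 : 𝕜))
  have h' : ∑ j ∈ s, ‖v j a‖₊ ^ 2 ≤ 1 := by
    rw [← NNReal.coe_le_coe]
    push_cast
    simpa [lp.inner_single_right, lp.norm_single, RCLike.inner_apply] using h
  exact_mod_cast h'

/-- Any orthonormal family of `k+1` vectors in `ℓ²(ℕ,ℂ)` has total number-operator
expectation at least `0 + 1 + ⋯ + k = k(k+1)/2`; the minimum is attained by the
projection onto the first `k+1` Fock basis vectors. -/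
theorem number_operator_trace_lower_bound (k : ℕ)
    (ψ : Fin (k+1) → lp (fun _ : ℕ => ℂ) 2) (hψ : Orthonormal ℂ ψ) :
    ((k : ℝ≥0∞) * ((k : ℝ≥0∞) + 1)) / 2
      ≤ ∑ j : Fin (k+1), ∑' n : ℕ, (n : ℝ≥0∞) * (‖(ψ j : ∀ _ : ℕ, ℂ) n‖₊ : ℝ≥0∞) ^ 2 := by
  set p : ℕ → ℝ≥0∞ := fun n => ∑ j, (‖(ψ j : ∀ _ : ℕ, ℂ) n‖₊ : ℝ≥0∞) ^ 2
  have mass : ∑' n, p n = k + 1 := by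
    have unit (j : Fin (k + 1)) : ‖ψ j‖₊ = 1 := NNReal.eq (hψ.1 j)
    rw [Summable.tsum_finsetSum fun _ _ => ENNReal.summable]
    simp [lp.tsum_nnnorm_sq_eq, unit]
  have gauss : ∑ m ∈ range (k + 1), (m : ℝ≥0∞) = ((k : ℝ≥0∞) * ((k : ℝ≥0∞) + 1)) / 2 := by
    rw [ENNReal.eq_div_iff two_ne_zero ENNReal.ofNat_ne_top, mul_comm, ← Nat.cast_sum]
    have := sum_range_id_mul_two (k + 1)
    rw [Nat.add_sub_cancel, mul_comm (k + 1)] at this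
    exact_mod_cast this
  calc ((k : ℝ≥0∞) * ((k : ℝ≥0∞) + 1)) / 2 = ∑ m ∈ range (k + 1), (m : ℝ≥0∞) := gauss.symm
    _ ≤ ∑' n : ℕ, (n : ℝ≥0∞) * p n :=
        ENNReal.sum_range_le_tsum_natCast_mul (hψ.sum_nnnorm_apply_sq_le_one univ)
          (by rw [mass, Nat.cast_succ])
    _ = _ := by
        simp_rw [p, mul_sum]
        exact Summable.tsum_finsetSum fun _ _ => ENNReal.summable
end

section
/- Let ν₀, ν₁ ≥ 0 and define g : (0,1) → ℝ by g(x) := ν₁ - ν₀ + (1-x)·(ν₁·x - ν₀)/(x·log x). Then g is monotone nonincreasing on (0,1); moreover, if ν₀ > 0 then g is strictly decreasing on (0,1). -/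
/-!
Away from `x = 0` the function splits as
`g x = ν₁ - ν₀ + ν₁ * ((1 - x) / log x) - ν₀ * ((1 - x) / (x * log x))`.
On `(0, 1)` the first quotient is strictly decreasing and the second strictly increasing: their
derivatives are `(x - 1 - x log x) / (x log² x)` and `(x - 1 - log x) / (x log x)²`, whose signs
come from `log y < y - 1` at `y = 1 / x` and at `y = x`. Both claims follow since `ν₀, ν₁ ≥ 0`.
-/

open Real

/-- The critical-point function `g` of the entropy-production functional of single-mode
phase-covariant Gaussian semigroups evaluated on thermal states. -/
noncomputable def gFun (ν₀ ν₁ : ℝ) (x : ℝ) : ℝ :=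
  ν₁ - ν₀ + (1 - x) * (ν₁ * x - ν₀) / (x * Real.log x)

namespace Real

lemma sub_one_lt_mul_log {x : ℝ} (hx : 0 < x) (hx1 : x ≠ 1) : x - 1 < x * log x := by
  have h := log_lt_sub_one_of_pos (inv_pos.mpr hx) (inv_ne_one.mpr hx1)
  rw [log_inv] at h
  have := mul_lt_mul_of_pos_left h hx
  rw [mul_sub, mul_inv_cancel₀ hx.ne'] at this
  linarith

lemma hasDerivAt_one_sub_div_log {x : ℝ} (hx : 0 < x) (hx1 : x ≠ 1) :
    HasDerivAt (fun y => (1 - y) / log y) ((x - 1 - x * log x) / (x * log x ^ 2)) x := by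
  have hlog : log x ≠ 0 := log_ne_zero_of_pos_of_ne_one hx hx1
  refine (((hasDerivAt_id' x).const_sub 1).div (hasDerivAt_log hx.ne') hlog).congr_deriv ?_
  field_simp
  ring

lemma hasDerivAt_one_sub_div_mul_log {x : ℝ} (hx : 0 < x) (hx1 : x ≠ 1) :
    HasDerivAt (fun y => (1 - y) / (y * log y)) ((x - 1 - log x) / (x * log x) ^ 2) x := by
  have hlog : log x ≠ 0 := log_ne_zero_of_pos_of_ne_one hx hx1
  refine (((hasDerivAt_id' x).const_sub 1).div (hasDerivAt_mul_log hx.ne')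
    (mul_ne_zero hx.ne' hlog)).congr_deriv ?_
  field_simp
  ring

lemma strictAntiOn_one_sub_div_log : StrictAntiOn (fun x => (1 - x) / log x) (Set.Ioo 0 1) := by
  refine strictAntiOn_of_deriv_neg (convex_Ioo 0 1)
    (fun x hx => (hasDerivAt_one_sub_div_log hx.1 hx.2.ne).continuousAt.continuousWithinAt)
    fun x hx => ?_
  rw [interior_Ioo] at hx
  rw [(hasDerivAt_one_sub_div_log hx.1 hx.2.ne).deriv]
  have hlog := log_neg hx.1 hx.2
  exact div_neg_of_neg_of_pos (by linarith [sub_one_lt_mul_log hx.1 hx.2.ne])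
    (mul_pos hx.1 (sq_pos_of_neg hlog))

lemma strictMonoOn_one_sub_div_mul_log :
    StrictMonoOn (fun x => (1 - x) / (x * log x)) (Set.Ioo 0 1) := by
  refine strictMonoOn_of_deriv_pos (convex_Ioo 0 1)
    (fun x hx => (hasDerivAt_one_sub_div_mul_log hx.1 hx.2.ne).continuousAt.continuousWithinAt)
    fun x hx => ?_
  rw [interior_Ioo] at hx
  rw [(hasDerivAt_one_sub_div_mul_log hx.1 hx.2.ne).deriv]
  have hlog := log_neg hx.1 hx.2
  exact div_pos (by linarith [log_lt_sub_one_of_pos hx.1 hx.2.ne])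
    (sq_pos_of_neg (mul_neg_of_pos_of_neg hx.1 hlog))

end Real

lemma gFun_eq_of_ne_zero (ν₀ ν₁ : ℝ) {x : ℝ} (hx : x ≠ 0) :
    gFun ν₀ ν₁ x = ν₁ - ν₀ + ν₁ * ((1 - x) / log x) - ν₀ * ((1 - x) / (x * log x)) := by
  have : (1 - x) * (ν₁ * x - ν₀) / (x * log x)
      = ν₁ * (1 - x) * (x / (x * log x)) - ν₀ * ((1 - x) / (x * log x)) := by ring
  rw [gFun, this, div_mul_cancel_left₀ hx]
  ring

lemma gFun_le_sub_mul (ν₀ : ℝ) {ν₁ : ℝ} (hν₁ : 0 ≤ ν₁) {a b : ℝ} (ha : a ∈ Set.Ioo 0 1)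
    (hb : b ∈ Set.Ioo 0 1) (hab : a < b) :
    gFun ν₀ ν₁ b ≤ gFun ν₀ ν₁ a - ν₀ * ((1 - b) / (b * log b) - (1 - a) / (a * log a)) := by
  have := mul_le_mul_of_nonneg_left (strictAntiOn_one_sub_div_log ha hb hab).le hν₁
  rw [gFun_eq_of_ne_zero _ _ ha.1.ne', gFun_eq_of_ne_zero _ _ hb.1.ne']
  linarith

/-- `g` is monotone nonincreasing on `(0,1)`, and strictly decreasing there if `ν₀ > 0`. -/
theorem gFun_antitone (ν₀ ν₁ : ℝ) (hν₀ : 0 ≤ ν₀) (hν₁ : 0 ≤ ν₁) :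
    AntitoneOn (gFun ν₀ ν₁) (Set.Ioo 0 1)
    ∧ (0 < ν₀ → StrictAntiOn (gFun ν₀ ν₁) (Set.Ioo 0 1)) := by
  refine ⟨fun a ha b hb hab => ?_, fun hν₀ a ha b hb hab => ?_⟩
  · rcases hab.eq_or_lt with rfl | hab
    · rfl
    have := mul_nonneg hν₀ (sub_pos.2 (strictMonoOn_one_sub_div_mul_log ha hb hab)).le
    linarith [gFun_le_sub_mul ν₀ hν₁ ha hb hab]
  · have := mul_pos hν₀ (sub_pos.2 (strictMonoOn_one_sub_div_mul_log ha hb hab))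
    linarith [gFun_le_sub_mul ν₀ hν₁ ha hb hab]
end

section
/- Let ν₀ > 0 and ν₁ ≥ 0, and define g : (0,1) → ℝ by g(x) := ν₁ - ν₀ + (1-x)·(ν₁·x - ν₀)/(x·log x). Then g(x) → +∞ as x → 0⁺, g(x) → 0 as x → 1⁻, g(x) > 0 for all x ∈ (0,1), and for every α > 0 there exists exactly one x ∈ (0,1) with g(x) = α. -/
open Real Filter

/-!
Write `L t = (t - 1) / log t` for the logarithmic mean of `1` and `t`. Then
`g x = ν₁ (1 - L x) + ν₀ (L x⁻¹ - 1)`. Since `log t < t - 1` and `log t > 1 - 1/t` for `t ≠ 1`,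
`L` is strictly increasing on `(0, 1)` and on `(1, ∞)`, with `L < 1` on the first and `L > 1`
on the second. So both summands of `g` are positive and decreasing on `(0, 1)`, the second one
strictly. As `L → 0` at `0`, `L → 1` at `1` (it is the inverse slope of `log` there) and
`L → ∞` at `∞`, `g` tends to `∞` at `0⁺` and to `0` at `1⁻`, and the intermediate value
theorem gives the bijection.
-/

open Set Topology

lemma surjOn_Ioi_of_tendsto_nhdsGT_atTop {α δ : Type*} [ConditionallyCompleteLinearOrder α]
    [TopologicalSpace α] [OrderTopology α] [DenselyOrdered α] [LinearOrder δ] [TopologicalSpace δ]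
    [OrderClosedTopology δ] {f : α → δ} {a b : α} {c : δ} (hab : a < b)
    (hf : ContinuousOn f (Ioo a b)) (ha : Tendsto f (𝓝[>] a) atTop)
    (hb : Tendsto f (𝓝[<] b) (𝓝 c)) : SurjOn f (Ioo a b) (Ioi c) := by
  have := nhdsGT_neBot_of_exists_gt ⟨b, hab⟩
  have := nhdsLT_neBot_of_exists_lt ⟨a, hab⟩
  intro y hy
  obtain ⟨u, hyu, hu⟩ := ((ha.eventually_ge_atTop y).and (Ioo_mem_nhdsGT hab)).exists
  obtain ⟨v, hvy, hv⟩ := ((hb.eventually (isOpen_Iio.mem_nhds hy)).and (Ioo_mem_nhdsLT hab)).exists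
  exact hf.surjOn_Icc hv hu ⟨hvy.le, hyu⟩

-- At `t = 1` the junk value is `0`, not the mean `1`.
noncomputable def logMean (t : ℝ) : ℝ := (t - 1) / log t

lemma hasDerivAt_logMean {t : ℝ} (ht₀ : 0 < t) (ht₁ : t ≠ 1) :
    HasDerivAt logMean ((log t - (t - 1) / t) / log t ^ 2) t := by
  have h := ((hasDerivAt_id' t).sub_const 1).div (hasDerivAt_log ht₀.ne')
    (log_ne_zero_of_pos_of_ne_one ht₀ ht₁)
  exact h.congr_deriv (by ring)

lemma sub_one_div_lt_log {t : ℝ} (ht₀ : 0 < t) (ht₁ : t ≠ 1) : (t - 1) / t < log t := by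
  have := log_lt_sub_one_of_pos (inv_pos.mpr ht₀) (inv_ne_one.mpr ht₁)
  rw [log_inv] at this
  rw [sub_div, div_self ht₀.ne', one_div]
  linarith

lemma strictMonoOn_logMean {s : Set ℝ} (hs : Convex ℝ s) (hs₀ : s ⊆ Ioi 0) (hs₁ : 1 ∉ s) :
    StrictMonoOn logMean s := by
  have hne {t} (ht : t ∈ s) : t ≠ 1 := fun h => hs₁ (h ▸ ht)
  refine strictMonoOn_of_deriv_pos hs
    (fun t ht => (hasDerivAt_logMean (hs₀ ht) (hne ht)).continuousAt.continuousWithinAt)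
    fun t ht => ?_
  have ht := interior_subset ht
  rw [(hasDerivAt_logMean (hs₀ ht) (hne ht)).deriv]
  exact div_pos (sub_pos.mpr (sub_one_div_lt_log (hs₀ ht) (hne ht)))
    (pow_two_pos_of_ne_zero (log_ne_zero_of_pos_of_ne_one (hs₀ ht) (hne ht)))

lemma logMean_lt_one {t : ℝ} (ht₀ : 0 < t) (ht₁ : t < 1) : logMean t < 1 := by
  rw [logMean, div_lt_one_of_neg (log_neg ht₀ ht₁)]
  exact log_lt_sub_one_of_pos ht₀ ht₁.ne

lemma one_lt_logMean {t : ℝ} (ht : 1 < t) : 1 < logMean t := by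
  rw [logMean, one_lt_div (log_pos ht)]
  exact log_lt_sub_one_of_pos (by linarith) ht.ne'

lemma tendsto_logMean_nhdsNE_one : Tendsto logMean (𝓝[≠] 1) (𝓝 1) := by
  have h := (hasDerivAt_iff_tendsto_slope.mp (hasDerivAt_log one_ne_zero)).inv₀ (by norm_num)
  simp only [inv_one] at h
  refine h.congr fun t => ?_
  simp only [slope_def_field, log_one, sub_zero, inv_div, logMean]

lemma tendsto_logMean_nhdsGT_zero : Tendsto logMean (𝓝[>] 0) (𝓝 0) := by
  have h : Tendsto (fun t : ℝ => t - 1) (𝓝[>] 0) (𝓝 (0 - 1)) :=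
    ((continuous_sub_right 1).tendsto 0).mono_left nhdsWithin_le_nhds
  exact h.div_atBot tendsto_log_nhdsGT_zero

lemma tendsto_logMean_atTop : Tendsto logMean atTop atTop := by
  have h := tendsto_pow_log_div_mul_add_atTop 1 (-1) 1 one_ne_zero
  have hpos : ∀ᶠ t : ℝ in atTop, 0 < log t ^ 1 / (1 * t + -1) := by
    filter_upwards [eventually_gt_atTop 1] with t ht
    exact div_pos (pow_pos (log_pos ht) 1) (by linarith)
  refine (tendsto_nhdsWithin_iff.mpr ⟨h, hpos⟩).inv_tendsto_nhdsGT_zero.congr fun t => ?_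
  simp only [Pi.inv_apply, pow_one, one_mul, inv_div, logMean, ← sub_eq_add_neg]

lemma gFun_eq_logMean (ν₀ ν₁ : ℝ) {x : ℝ} (hx : x ≠ 0) :
    gFun ν₀ ν₁ x = ν₁ * (1 - logMean x) + ν₀ * (logMean x⁻¹ - 1) := by
  simp only [gFun, logMean, log_inv]
  field_simp
  ring

lemma strictAntiOn_gFun {ν₀ ν₁ : ℝ} (hν₀ : 0 < ν₀) (hν₁ : 0 ≤ ν₁) :
    StrictAntiOn (gFun ν₀ ν₁) (Ioo 0 1) := by
  have hL : StrictMonoOn logMean (Ioo 0 1) :=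
    strictMonoOn_logMean (convex_Ioo 0 1) Ioo_subset_Ioi_self fun h => lt_irrefl _ h.2
  have hLinv : StrictMonoOn logMean (Ioi 1) :=
    strictMonoOn_logMean (convex_Ioi 1) (Ioi_subset_Ioi zero_le_one) self_notMem_Ioi
  have hfirst : AntitoneOn (fun x => ν₁ * (1 - logMean x)) (Ioo 0 1) := fun x hx y hy hxy =>
    mul_le_mul_of_nonneg_left (sub_le_sub_left (hL.monotoneOn hx hy hxy) 1) hν₁
  have hsecond : StrictAntiOn (fun x => ν₀ * (logMean x⁻¹ - 1)) (Ioo 0 1) := fun x hx y hy hxy =>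
    mul_lt_mul_of_pos_left (sub_lt_sub_right (hLinv ((one_lt_inv₀ hy.1).mpr hy.2)
      ((one_lt_inv₀ hx.1).mpr hx.2) ((inv_lt_inv₀ hy.1 hx.1).mpr hxy)) 1) hν₀
  exact (hfirst.add_strictAnti hsecond).congr fun x hx => (gFun_eq_logMean ν₀ ν₁ hx.1.ne').symm

lemma gFun_pos {ν₀ ν₁ x : ℝ} (hν₀ : 0 < ν₀) (hν₁ : 0 ≤ ν₁) (hx : x ∈ Ioo 0 1) :
    0 < gFun ν₀ ν₁ x := by
  rw [gFun_eq_logMean ν₀ ν₁ hx.1.ne']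
  have h₁ := logMean_lt_one hx.1 hx.2
  have h₂ := one_lt_logMean ((one_lt_inv₀ hx.1).mpr hx.2)
  exact add_pos_of_nonneg_of_pos (mul_nonneg hν₁ (by linarith)) (mul_pos hν₀ (by linarith))

lemma tendsto_gFun_nhdsGT_zero {ν₀ : ℝ} (ν₁ : ℝ) (hν₀ : 0 < ν₀) :
    Tendsto (gFun ν₀ ν₁) (𝓝[>] 0) atTop := by
  have h₁ : Tendsto (fun x => ν₁ * (1 - logMean x)) (𝓝[>] 0) (𝓝 (ν₁ * (1 - 0))) :=
    (tendsto_logMean_nhdsGT_zero.const_sub 1).const_mul ν₁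
  have h₂ : Tendsto (fun x => ν₀ * (logMean x⁻¹ - 1)) (𝓝[>] 0) atTop :=
    (tendsto_atTop_add_const_right _ (-1)
      (tendsto_logMean_atTop.comp tendsto_inv_nhdsGT_zero)).const_mul_atTop hν₀
  refine (h₁.add_atTop h₂).congr' ?_
  filter_upwards [self_mem_nhdsWithin] with x hx using (gFun_eq_logMean ν₀ ν₁ hx.ne').symm

lemma tendsto_gFun_nhdsLT_one (ν₀ ν₁ : ℝ) : Tendsto (gFun ν₀ ν₁) (𝓝[<] 1) (𝓝 0) := by
  have hL : Tendsto logMean (𝓝[<] 1) (𝓝 1) :=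
    tendsto_logMean_nhdsNE_one.mono_left (nhdsWithin_mono _ fun _ hx => ne_of_lt hx)
  have hinv : Tendsto (fun x : ℝ => x⁻¹) (𝓝[<] 1) (𝓝[≠] 1) := by
    refine tendsto_nhdsWithin_iff.mpr ⟨?_, ?_⟩
    · simpa using ((continuousAt_inv₀ (one_ne_zero' ℝ)).tendsto).mono_left nhdsWithin_le_nhds
    · filter_upwards [Ioo_mem_nhdsLT one_pos] with x hx
      exact ((one_lt_inv₀ hx.1).mpr hx.2).ne'
  have h := ((hL.const_sub 1).const_mul ν₁).add
    (((tendsto_logMean_nhdsNE_one.comp hinv).sub_const 1).const_mul ν₀)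
  rw [sub_self, mul_zero, mul_zero, add_zero] at h
  refine h.congr' ?_
  filter_upwards [Ioo_mem_nhdsLT one_pos] with x hx using (gFun_eq_logMean ν₀ ν₁ hx.1.ne').symm

lemma continuousOn_gFun (ν₀ ν₁ : ℝ) : ContinuousOn (gFun ν₀ ν₁) (Ioo 0 1) := fun x hx =>
  (continuousAt_const.add ((by fun_prop : ContinuousAt (fun x => (1 - x) * (ν₁ * x - ν₀)) x).div
    (continuousAt_id.mul (continuousAt_log hx.1.ne'))
    (mul_neg_of_pos_of_neg hx.1 (log_neg hx.1 hx.2)).ne)).continuousWithinAt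

/-- For `ν₀ > 0`: `g → +∞` at `0⁺`, `g → 0` at `1⁻`, `g > 0` on `(0,1)`, and every
`α > 0` is attained by `g` exactly once on `(0,1)`. -/
theorem gFun_limits_and_bijective (ν₀ ν₁ : ℝ) (hν₀ : 0 < ν₀) (hν₁ : 0 ≤ ν₁) :
    Tendsto (gFun ν₀ ν₁) (nhdsWithin 0 (Set.Ioi 0)) atTop
    ∧ Tendsto (gFun ν₀ ν₁) (nhdsWithin 1 (Set.Iio 1)) (nhds 0)
    ∧ (∀ x ∈ Set.Ioo (0:ℝ) 1, 0 < gFun ν₀ ν₁ x)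
    ∧ (∀ α : ℝ, 0 < α → ∃! x : ℝ, x ∈ Set.Ioo (0:ℝ) 1 ∧ gFun ν₀ ν₁ x = α) := by
  refine ⟨tendsto_gFun_nhdsGT_zero ν₁ hν₀, tendsto_gFun_nhdsLT_one ν₀ ν₁,
    fun x hx => gFun_pos hν₀ hν₁ hx, fun α hα => ?_⟩
  obtain ⟨x, hx, hgx⟩ := surjOn_Ioi_of_tendsto_nhdsGT_atTop zero_lt_one (continuousOn_gFun ν₀ ν₁)
    (tendsto_gFun_nhdsGT_zero ν₁ hν₀) (tendsto_gFun_nhdsLT_one ν₀ ν₁) hα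
  exact ⟨x, ⟨hx, hgx⟩, fun y hy => (strictAntiOn_gFun hν₀ hν₁).injOn hy.1 hx (hy.2.trans hgx.symm)⟩
end
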